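/- In the l¹ or l∞ operator norm, the bound K₄ := (1/2^ℓ) Σ_{subsets {r₁<⋯<r_n} of {1,…,ℓ}} ‖W_{(ℓ+1,r_n)}^abs W_{(r_n,r_{n-1})}^abs ⋯ W_{(r₂,r₁)}^abs W_{(r₁,0)}^abs‖ satisfies K ≤ K₄ ≤ K₁, where K is the maximum of ‖W_ℓ D_ℓ ⋯ D₁ W₀‖ over diagonal D_r with entries in [0,1] and K₁ is the Combettes–Pesquet bound. -/

import Mathlib

/-- The l¹ operator norm of a matrix: maximum absolute column sum. -/
noncomputable def l1N {m n : ℕ} (A : Matrix (Fin m) (Fin n) ℝ) : ℝ :=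
  ⨆ j, ∑ i, |A i j|

/-- The l∞ operator norm of a matrix: maximum absolute row sum. -/
noncomputable def linfN {m n : ℕ} (A : Matrix (Fin m) (Fin n) ℝ) : ℝ :=
  ⨆ i, ∑ j, |A i j|

/-- Entrywise absolute value of a matrix. -/
def entAbs {m n : ℕ} (A : Matrix (Fin m) (Fin n) ℝ) : Matrix (Fin m) (Fin n) ℝ :=
  fun i j => |A i j|

/-- The chunk product `W (s+k) * ⋯ * W (s+1) * W s`. -/
def Wchunk (a : ℕ → ℕ) (W : ∀ r : ℕ, Matrix (Fin (a (r+1))) (Fin (a r)) ℝ) (s : ℕ) :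
    (k : ℕ) → Matrix (Fin (a (s + k + 1))) (Fin (a s)) ℝ
  | 0 => W s
  | k+1 => W (s + k + 1) * Wchunk a W s k

/-- The chunk product `W_{(t,s)} = W (t-1) * ⋯ * W s` for `s < t`, cast to its natural type. -/
def Wts (a : ℕ → ℕ) (W : ∀ r : ℕ, Matrix (Fin (a (r+1))) (Fin (a r)) ℝ) (s t : ℕ) :
    Matrix (Fin (a t)) (Fin (a s)) ℝ :=
  if h : s < t then
    (Wchunk a W s (t - s - 1)).submatrix
      (Fin.cast (congrArg a (by omega : t = s + (t - s - 1) + 1))) id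
  else 0

/-- Given a decreasing list `[r_n, …, r_1]` of cut points, the product
`nn (W_{(t,r_n)}) * nn (W_{(r_n,r_{n-1})}) * ⋯ * nn (W_{(r_1,0)})` of chunk norms. -/
noncomputable def chunkNormProd (a : ℕ → ℕ)
    (W : ∀ r : ℕ, Matrix (Fin (a (r+1))) (Fin (a r)) ℝ)
    (nn : ∀ m n : ℕ, Matrix (Fin m) (Fin n) ℝ → ℝ) : ℕ → List ℕ → ℝ
  | t, [] => nn (a t) (a 0) (Wts a W 0 t)
  | t, r :: rest => nn (a t) (a r) (Wts a W r t) * chunkNormProd a W nn r rest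

/-- The Combettes–Pesquet bound `K₁`, for the norm `nn`. -/
noncomputable def K1 (a : ℕ → ℕ) (W : ∀ r : ℕ, Matrix (Fin (a (r+1))) (Fin (a r)) ℝ)
    (nn : ∀ m n : ℕ, Matrix (Fin m) (Fin n) ℝ → ℝ) (ℓ : ℕ) : ℝ :=
  (1 / 2 ^ ℓ) * ∑ S ∈ (Finset.Icc 1 ℓ).powerset,
    chunkNormProd a W nn (ℓ + 1) ((S.sort (· ≤ ·)).reverse)

/-- Given a decreasing list `[r_n, …, r_1]` of cut points, the matrix product
`W_{(t,r_n)}^abs * W_{(r_n,r_{n-1})}^abs * ⋯ * W_{(r_1,0)}^abs`. -/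
noncomputable def chunkAbsProd (a : ℕ → ℕ)
    (W : ∀ r : ℕ, Matrix (Fin (a (r+1))) (Fin (a r)) ℝ) :
    (t : ℕ) → List ℕ → Matrix (Fin (a t)) (Fin (a 0)) ℝ
  | t, [] => entAbs (Wts a W 0 t)
  | t, r :: rest => entAbs (Wts a W r t) * chunkAbsProd a W r rest

/-- The bound `K₄`, for the norm `nn`. -/
noncomputable def K4 (a : ℕ → ℕ) (W : ∀ r : ℕ, Matrix (Fin (a (r+1))) (Fin (a r)) ℝ)
    (nn : ∀ m n : ℕ, Matrix (Fin m) (Fin n) ℝ → ℝ) (ℓ : ℕ) : ℝ :=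
  (1 / 2 ^ ℓ) * ∑ S ∈ (Finset.Icc 1 ℓ).powerset,
    nn (a (ℓ+1)) (a 0) (chunkAbsProd a W (ℓ + 1) ((S.sort (· ≤ ·)).reverse))

/-- The product `W ℓ * D ℓ * W (ℓ-1) * D (ℓ-1) * ⋯ * D 1 * W 0`. -/
def chainWD (a : ℕ → ℕ) (W : ∀ r : ℕ, Matrix (Fin (a (r+1))) (Fin (a r)) ℝ)
    (D : ∀ r : ℕ, Matrix (Fin (a r)) (Fin (a r)) ℝ) :
    (k : ℕ) → Matrix (Fin (a (k+1))) (Fin (a 0)) ℝ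
  | 0 => W 0
  | k+1 => W (k+1) * (D (k+1) * chainWD a W D k)

/-!
With `Z r = 2 • D r - 1`, which is diagonal with entries in `[-1, 1]`, expanding
`D r = (1 + Z r) / 2` in the product gives
`2 ^ ℓ • W ℓ D ℓ ⋯ D 1 W 0 = ∑_S W_{(ℓ+1,r_n)} Z r_n W_{(r_n,r_{n-1})} ⋯ Z r_1 W_{(r_1,0)}`,
one term per `S = {r_1 < ⋯ < r_n} ⊆ {1, …, ℓ}`. Each term is entrywise dominated in absolute
value by the corresponding product of the `W_{(t,s)}^abs`, so for any norm that is monotone in the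
absolute values of the entries the triangle inequality gives `K ≤ K₄`, and submultiplicativity
together with `‖A^abs‖ = ‖A‖` gives `K₄ ≤ K₁`. Both operator norms are of this kind, the l¹
norm of `A` being the l∞ norm of `Aᵀ`.
-/

structure IsMonotoneMatrixNorm (nn : ∀ m n : ℕ, Matrix (Fin m) (Fin n) ℝ → ℝ) : Prop where
  le_of_abs_le {m n : ℕ} {A B : Matrix (Fin m) (Fin n) ℝ} :
    (∀ i j, |A i j| ≤ |B i j|) → nn m n A ≤ nn m n B
  add_le {m n : ℕ} (A B : Matrix (Fin m) (Fin n) ℝ) : nn m n (A + B) ≤ nn m n A + nn m n B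
  smul_eq {m n : ℕ} {c : ℝ} (A : Matrix (Fin m) (Fin n) ℝ) :
    0 ≤ c → nn m n (c • A) = c * nn m n A
  mul_le {m n p : ℕ} (A : Matrix (Fin m) (Fin n) ℝ) (B : Matrix (Fin n) (Fin p) ℝ) :
    nn m p (A * B) ≤ nn m n A * nn n p B

namespace IsMonotoneMatrixNorm

variable {nn : ∀ m n : ℕ, Matrix (Fin m) (Fin n) ℝ → ℝ} {m n : ℕ}

lemma zero_eq (h : IsMonotoneMatrixNorm nn) : nn m n 0 = 0 := by
  simpa using h.smul_eq (0 : Matrix (Fin m) (Fin n) ℝ) le_rfl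

lemma nonneg (h : IsMonotoneMatrixNorm nn) (A : Matrix (Fin m) (Fin n) ℝ) : 0 ≤ nn m n A :=
  h.zero_eq (m := m) (n := n) ▸ h.le_of_abs_le fun i j => by simp

lemma entAbs_eq (h : IsMonotoneMatrixNorm nn) (A : Matrix (Fin m) (Fin n) ℝ) :
    nn m n (entAbs A) = nn m n A :=
  le_antisymm (h.le_of_abs_le fun i j => by simp [entAbs])
    (h.le_of_abs_le fun i j => by simp [entAbs])

lemma sum_le (h : IsMonotoneMatrixNorm nn) {ι : Type*} (s : Finset ι)
    (A : ι → Matrix (Fin m) (Fin n) ℝ) : nn m n (∑ x ∈ s, A x) ≤ ∑ x ∈ s, nn m n (A x) :=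
  Finset.le_sum_of_subadditive (nn m n) h.zero_eq.le h.add_le s A

end IsMonotoneMatrixNorm

open Matrix

attribute [local instance] Matrix.linftyOpNormedAddCommGroup Matrix.linftyOpNormedSpace

lemma linfN_eq_norm {m n : ℕ} (A : Matrix (Fin m) (Fin n) ℝ) : linfN A = ‖A‖ := by
  simp [linfN, Matrix.linfty_opNorm_def, Finset.sup_univ_eq_ciSup, NNReal.coe_iSup]

lemma l1N_eq_linfN_transpose {m n : ℕ} (A : Matrix (Fin m) (Fin n) ℝ) : l1N A = linfN Aᵀ := rfl

lemma isMonotoneMatrixNorm_linfN : IsMonotoneMatrixNorm fun _ _ A => linfN A where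
  le_of_abs_le {_ _ A B} hAB := Real.iSup_le
    (fun i => (Finset.sum_le_sum fun j _ => hAB i j).trans
      (le_ciSup (f := fun i => ∑ j, |B i j|) (Set.finite_range _).bddAbove i))
    (by simp [linfN_eq_norm])
  add_le A B := by simpa only [linfN_eq_norm] using norm_add_le A B
  smul_eq A hc := by simp only [linfN_eq_norm, norm_smul, Real.norm_of_nonneg hc]
  mul_le A B := by simpa only [linfN_eq_norm] using Matrix.linfty_opNorm_mul A B

lemma isMonotoneMatrixNorm_l1N : IsMonotoneMatrixNorm fun _ _ A => l1N A where
  le_of_abs_le hAB := isMonotoneMatrixNorm_linfN.le_of_abs_le fun i j => hAB j i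
  add_le A B := isMonotoneMatrixNorm_linfN.add_le Aᵀ Bᵀ
  smul_eq A hc := isMonotoneMatrixNorm_linfN.smul_eq Aᵀ hc
  mul_le A B := by
    simpa only [l1N_eq_linfN_transpose, Matrix.transpose_mul, mul_comm (linfN Aᵀ)] using
      isMonotoneMatrixNorm_linfN.mul_le Bᵀ Aᵀ

lemma Finset.reverse_sort_le {α : Type*} [LinearOrder α] (s : Finset α) :
    (s.sort (· ≤ ·)).reverse = s.sort (· ≥ ·) := by
  apply List.Perm.eq_of_pairwise' (r := (· ≥ ·))
  · exact List.pairwise_reverse.2 (Finset.pairwise_sort s _)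
  · exact Finset.pairwise_sort s _
  · exact (List.reverse_perm _).trans
      ((Finset.sort_perm_toList _ _).trans (Finset.sort_perm_toList _ _).symm)

lemma Finset.reverse_sort_le_insert {α : Type*} [LinearOrder α] {s : Finset α} {a : α}
    (h : ∀ b ∈ s, b < a) :
    ((insert a s).sort (· ≤ ·)).reverse = a :: (s.sort (· ≤ ·)).reverse := by
  rw [reverse_sort_le, reverse_sort_le,
    sort_insert _ (fun b hb => (h b hb).le) fun ha => (h a ha).false]

lemma Matrix.abs_mul_apply_le {l m n : Type*} [Fintype m] (A : Matrix l m ℝ) (B : Matrix m n ℝ)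
    (i : l) (j : n) : |(A * B) i j| ≤ ∑ k, |A i k| * |B k j| := by
  simpa only [Matrix.mul_apply, abs_mul] using
    Finset.abs_sum_le_sum_abs (fun k => A i k * B k j) Finset.univ

lemma Matrix.abs_diag_mul_apply_le {m n : Type*} [Fintype m] [DecidableEq m] {Z : Matrix m m ℝ}
    (hZ0 : ∀ i j, i ≠ j → Z i j = 0) (hZ1 : ∀ i, |Z i i| ≤ 1) (B : Matrix m n ℝ) (i : m)
    (j : n) : |(Z * B) i j| ≤ |B i j| := by
  rw [Matrix.mul_apply, Finset.sum_eq_single i (fun k _ hk => by rw [hZ0 i k hk.symm, zero_mul])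
    (by simp), abs_mul]
  exact mul_le_of_le_one_left (abs_nonneg _) (hZ1 i)

section Chunks

variable {a : ℕ → ℕ} {W : ∀ r : ℕ, Matrix (Fin (a (r+1))) (Fin (a r)) ℝ}

lemma Wts_add_succ (s n : ℕ) : Wts a W s (s + n + 1) = Wchunk a W s n := by
  rw [Wts, dif_pos (by omega)]
  generalize_proofs hp
  revert hp
  rw [show s + n + 1 - s - 1 = n by omega]
  intro _
  rfl

lemma Wts_succ_self (s : ℕ) : Wts a W s (s + 1) = W s :=
  Wts_add_succ s 0

lemma Wts_succ {s t : ℕ} (h : s < t) : Wts a W s (t + 1) = W t * Wts a W s t := by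
  obtain ⟨n, rfl⟩ : ∃ n, t = s + n + 1 := ⟨t - s - 1, by omega⟩
  rw [Wts_add_succ]
  exact Wts_add_succ s (n + 1)

variable (a W) in
noncomputable def chunkZProd (Z : ∀ r : ℕ, Matrix (Fin (a r)) (Fin (a r)) ℝ) :
    (t : ℕ) → List ℕ → Matrix (Fin (a t)) (Fin (a 0)) ℝ
  | t, [] => Wts a W 0 t
  | t, r :: rest => Wts a W r t * (Z r * chunkZProd Z r rest)

lemma chunkZProd_succ (Z : ∀ r : ℕ, Matrix (Fin (a r)) (Fin (a r)) ℝ) {t : ℕ} {L : List ℕ}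
    (ht : 0 < t) (hL : ∀ r ∈ L, r < t) :
    chunkZProd a W Z (t + 1) L = W t * chunkZProd a W Z t L := by
  cases L with
  | nil => exact Wts_succ ht
  | cons r rest => simp only [chunkZProd, Wts_succ (hL r List.mem_cons_self), Matrix.mul_assoc]

lemma sum_chunkZProd (D : ∀ r : ℕ, Matrix (Fin (a r)) (Fin (a r)) ℝ) (ℓ : ℕ) :
    ∑ S ∈ (Finset.Icc 1 ℓ).powerset,
      chunkZProd a W (fun r => (2 : ℝ) • D r - 1) (ℓ + 1) (S.sort (· ≤ ·)).reverse =
      (2 ^ ℓ : ℝ) • chainWD a W D ℓ := by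
  set Z : ∀ r : ℕ, Matrix (Fin (a r)) (Fin (a r)) ℝ := fun r => (2 : ℝ) • D r - 1
  induction ℓ with
  | zero => simp [chunkZProd, chainWD, Wts_succ_self]
  | succ ℓ ih =>
    have hlt : ∀ S ∈ (Finset.Icc 1 ℓ).powerset, ∀ r ∈ S, r < ℓ + 1 := fun S hS r hr =>
      Nat.lt_succ_of_le (Finset.mem_Icc.1 (Finset.mem_powerset.1 hS hr)).2
    have hstay : ∀ S ∈ (Finset.Icc 1 ℓ).powerset,
        chunkZProd a W Z (ℓ + 1 + 1) (S.sort (· ≤ ·)).reverse =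
          W (ℓ + 1) * chunkZProd a W Z (ℓ + 1) (S.sort (· ≤ ·)).reverse := fun S hS =>
      chunkZProd_succ Z (by omega) fun r hr => hlt S hS r (by simpa using hr)
    have hcut : ∀ S ∈ (Finset.Icc 1 ℓ).powerset,
        chunkZProd a W Z (ℓ + 1 + 1) ((insert (ℓ + 1) S).sort (· ≤ ·)).reverse =
          W (ℓ + 1) * (Z (ℓ + 1) * chunkZProd a W Z (ℓ + 1) (S.sort (· ≤ ·)).reverse) :=
      fun S hS => by
        rw [Finset.reverse_sort_le_insert (hlt S hS), chunkZProd, Wts_succ_self]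
    rw [← Finset.insert_Icc_right_eq_Icc_add_one (by omega),
      Finset.sum_powerset_insert (by simp), Finset.sum_congr rfl hstay, Finset.sum_congr rfl hcut,
      ← Matrix.mul_sum, ← Matrix.mul_sum, ← Matrix.mul_sum, ih, ← Matrix.mul_add, Matrix.sub_mul,
      Matrix.one_mul, Matrix.smul_mul, add_sub_cancel, chainWD, Matrix.mul_smul, Matrix.mul_smul,
      Matrix.mul_smul, smul_smul, pow_succ']

lemma abs_chunkZProd_le {Z : ∀ r : ℕ, Matrix (Fin (a r)) (Fin (a r)) ℝ}
    (hZ0 : ∀ r i j, i ≠ j → Z r i j = 0) (hZ1 : ∀ r i, |Z r i i| ≤ 1) :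
    ∀ (L : List ℕ) (t : ℕ) (i : Fin (a t)) (j : Fin (a 0)),
      |chunkZProd a W Z t L i j| ≤ chunkAbsProd a W t L i j
  | [], _, _, _ => le_rfl
  | r :: rest, _, i, j => (Matrix.abs_mul_apply_le _ _ i j).trans <|
      Finset.sum_le_sum fun k _ => mul_le_mul_of_nonneg_left
        ((Matrix.abs_diag_mul_apply_le (hZ0 r) (hZ1 r) _ k j).trans
          (abs_chunkZProd_le hZ0 hZ1 rest r k j)) (abs_nonneg _)

end Chunks

namespace IsMonotoneMatrixNorm

variable {nn : ∀ m n : ℕ, Matrix (Fin m) (Fin n) ℝ → ℝ} {a : ℕ → ℕ}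
  {W : ∀ r : ℕ, Matrix (Fin (a (r+1))) (Fin (a r)) ℝ}

lemma chunkAbsProd_le (h : IsMonotoneMatrixNorm nn) :
    ∀ (t : ℕ) (L : List ℕ), nn _ _ (chunkAbsProd a W t L) ≤ chunkNormProd a W nn t L
  | _, [] => (h.entAbs_eq _).le
  | t, r :: rest => calc
      nn _ _ (entAbs (Wts a W r t) * chunkAbsProd a W r rest)
        ≤ nn _ _ (Wts a W r t) * nn _ _ (chunkAbsProd a W r rest) := by
          simpa only [h.entAbs_eq] using h.mul_le (entAbs (Wts a W r t)) _
      _ ≤ nn _ _ (Wts a W r t) * chunkNormProd a W nn r rest :=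
          mul_le_mul_of_nonneg_left (h.chunkAbsProd_le r rest) (h.nonneg _)

lemma K4_le_K1 (h : IsMonotoneMatrixNorm nn) (ℓ : ℕ) : K4 a W nn ℓ ≤ K1 a W nn ℓ := by
  unfold K4 K1
  gcongr with S
  exact h.chunkAbsProd_le _ _

lemma chainWD_le_K4 (h : IsMonotoneMatrixNorm nn) (ℓ : ℕ)
    {D : ∀ r : ℕ, Matrix (Fin (a r)) (Fin (a r)) ℝ} (hD0 : ∀ r i j, i ≠ j → D r i j = 0)
    (hD1 : ∀ r i, D r i i ∈ Set.Icc (0 : ℝ) 1) :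
    nn _ _ (chainWD a W D ℓ) ≤ K4 a W nn ℓ := by
  set Z : ∀ r : ℕ, Matrix (Fin (a r)) (Fin (a r)) ℝ := fun r => (2 : ℝ) • D r - 1
  have hZ0 : ∀ r i j, i ≠ j → Z r i j = 0 := fun r i j hij => by
    simp [Z, Matrix.one_apply_ne hij, hD0 r i j hij]
  have hZ1 : ∀ r i, |Z r i i| ≤ 1 := fun r i => by
    simp only [Z, Matrix.sub_apply, Matrix.smul_apply, Matrix.one_apply_eq, smul_eq_mul, abs_le]
    constructor <;> linarith [(hD1 r i).1, (hD1 r i).2]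
  have hchain : chainWD a W D ℓ = (1 / 2 ^ ℓ : ℝ) • ∑ S ∈ (Finset.Icc 1 ℓ).powerset,
      chunkZProd a W Z (ℓ + 1) (S.sort (· ≤ ·)).reverse := by
    rw [sum_chunkZProd, smul_smul, one_div_mul_cancel (by positivity), one_smul]
  calc nn _ _ (chainWD a W D ℓ)
      = (1 / 2 ^ ℓ) * nn _ _ (∑ S ∈ (Finset.Icc 1 ℓ).powerset,
          chunkZProd a W Z (ℓ + 1) (S.sort (· ≤ ·)).reverse) := by
        rw [hchain, h.smul_eq _ (by positivity)]
    _ ≤ (1 / 2 ^ ℓ) * ∑ S ∈ (Finset.Icc 1 ℓ).powerset,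
          nn _ _ (chunkZProd a W Z (ℓ + 1) (S.sort (· ≤ ·)).reverse) := by
        gcongr
        exact h.sum_le _ _
    _ ≤ K4 a W nn ℓ := by
        unfold K4
        gcongr with S
        exact h.le_of_abs_le fun i j =>
          (abs_chunkZProd_le hZ0 hZ1 _ _ i j).trans (le_abs_self _)

end IsMonotoneMatrixNorm

/-- In the l¹ or l∞ operator norm, `K ≤ K₄ ≤ K₁`: the norm of
`W ℓ D ℓ ⋯ D 1 W 0` (for any diagonal `D r` with entries in `[0,1]`) is bounded by `K₄`,
and `K₄` is bounded by the Combettes–Pesquet bound `K₁`. -/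
theorem K_le_K4_le_K1
    (a : ℕ → ℕ) (ℓ : ℕ) (W : ∀ r : ℕ, Matrix (Fin (a (r+1))) (Fin (a r)) ℝ)
    (D : ∀ r : ℕ, Matrix (Fin (a r)) (Fin (a r)) ℝ)
    (hD0 : ∀ r i j, i ≠ j → D r i j = 0)
    (hD1 : ∀ r i, D r i i ∈ Set.Icc (0:ℝ) 1) :
    (l1N (chainWD a W D ℓ) ≤ K4 a W (fun _ _ A => l1N A) ℓ ∧
      K4 a W (fun _ _ A => l1N A) ℓ ≤ K1 a W (fun _ _ A => l1N A) ℓ) ∧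
    (linfN (chainWD a W D ℓ) ≤ K4 a W (fun _ _ A => linfN A) ℓ ∧
      K4 a W (fun _ _ A => linfN A) ℓ ≤ K1 a W (fun _ _ A => linfN A) ℓ) :=
  ⟨⟨isMonotoneMatrixNorm_l1N.chainWD_le_K4 ℓ hD0 hD1, isMonotoneMatrixNorm_l1N.K4_le_K1 ℓ⟩,
    ⟨isMonotoneMatrixNorm_linfN.chainWD_le_K4 ℓ hD0 hD1, isMonotoneMatrixNorm_linfN.K4_le_K1 ℓ⟩⟩
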